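/- Let K be a quadratic number field, and let 𝒜 be a nonzero ideal of O_K coprime to 2D_K. Then for any rational integer m, the quadratic residue symbol (m/𝒜)_K equals the Jacobi symbol (m/N(𝒜)) in Q. -/

import Mathlib

/-!
For a maximal ideal `𝔭` of odd norm `q = pⁿ`, the symbol `(a/𝔭)_K` is the quadratic character of
the residue field `𝓞 K ⧸ 𝔭` evaluated at `a mod 𝔭`. A rational integer `m` reduces into the prime
field `𝔽_p`, where it is fixed by Frobenius, so splitting the exponent
`(q - 1)/2 = ((p - 1)/2)(1 + p + ⋯ + pⁿ⁻¹)` gives `m^((q-1)/2) = (m^((p-1)/2))ⁿ`, i.e. the `n`-th power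
of the Legendre symbol `(m/p)` by Euler's criterion; this is the Jacobi symbol `(m/q)`. Both sides
are multiplicative in `𝒜`: the left by definition, the right because the absolute norm is.
-/

open NumberField

open scoped Classical in
/-- The quadratic residue symbol `(a/𝔭)_K` on prime ideals of odd norm. -/
noncomputable def quadResSym (K : Type*) [Field K] [NumberField K]
    (𝔭 : Ideal (𝓞 K)) (a : 𝓞 K) : ℤ :=
  if a ∈ 𝔭 then 0
  else if a ^ ((Ideal.absNorm 𝔭 - 1) / 2) - 1 ∈ 𝔭 then 1 else -1

/-- The quadratic residue symbol `(a/𝒜)_K`, extended multiplicatively over the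
prime ideal factorization of `𝒜`. -/
noncomputable def quadResSymIdeal (K : Type*) [Field K] [NumberField K]
    (𝒜 : Ideal (𝓞 K)) (a : 𝓞 K) : ℤ :=
  ((UniqueFactorizationMonoid.normalizedFactors 𝒜).map
    (fun 𝔭 => quadResSym K 𝔭 a)).prod

open Finset in
theorem Nat.pow_div_two_eq_mul_geom_sum {p : ℕ} (hp : Odd p) (n : ℕ) :
    p ^ n / 2 = p / 2 * ∑ i ∈ range n, p ^ i := by
  obtain ⟨k, rfl⟩ := hp
  have h : (2 * k + 1) ^ n = 2 * (k * ∑ i ∈ range n, (2 * k + 1) ^ i) + 1 := by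
    rw [← geom_sum_mul_add (2 * k) n]; ring
  rw [show (2 * k + 1) / 2 = k by omega]
  omega

theorem Ideal.ringChar_quotient_ne_two {R : Type*} [CommRing R] {P : Ideal R}
    (h2 : (2 : R) ∉ P) : ringChar (R ⧸ P) ≠ 2 := by
  intro hchar
  have : ((2 : ℕ) : R ⧸ P) = 0 := (ringChar.spec _ 2).mpr hchar.dvd
  exact h2 (Ideal.Quotient.eq_zero_iff_mem.mp (by exact_mod_cast this))

theorem Ideal.notMem_of_isCoprime_span_singleton {R : Type*} [CommRing R] {I P : Ideal R}
    {x : R} (hcop : IsCoprime I (Ideal.span {x})) (hIP : I ≤ P) (hP : P ≠ ⊤) : x ∉ P := by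
  intro hx
  refine hP (top_le_iff.mp ?_)
  rw [← Ideal.isCoprime_iff_sup_eq.mp hcop]
  exact sup_le hIP ((Ideal.span_singleton_le_iff_mem P).mpr hx)

open Finset in
theorem intCast_pow_prime_pow_div_two {F : Type*} [Field F] {p : ℕ} [Fact p.Prime] [CharP F p]
    (hp : p ≠ 2) (m : ℤ) (n : ℕ) :
    (m : F) ^ (p ^ n / 2) = (legendreSym p m : F) ^ n := by
  let φ : ZMod p →+* F := ZMod.castHom dvd_rfl F
  have hfix : ∀ i, (m : F) ^ p ^ i = m := fun i => by
    rw [← map_intCast φ, ← map_pow, ZMod.pow_card_pow]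
  have hleg : (m : F) ^ (p / 2) = legendreSym p m := by
    rw [← map_intCast φ, ← map_pow, ← legendreSym.eq_pow, map_intCast]
  rw [Nat.pow_div_two_eq_mul_geom_sum ((Fact.out : p.Prime).odd_of_ne_two hp), mul_sum,
    ← prod_pow_eq_pow_sum]
  simp_rw [mul_comm (p / 2), pow_mul, hfix, hleg, prod_const, card_range]

theorem quadraticChar_intCast_eq_jacobiSym {F : Type*} [Field F] [Fintype F] [DecidableEq F]
    (hF : ringChar F ≠ 2) (m : ℤ) :
    quadraticChar F m = jacobiSym m (Fintype.card F) := by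
  obtain ⟨n, hp, hcard⟩ := FiniteField.card F (ringChar F)
  have := Fact.mk hp
  have hval : (quadraticChar F m : F) = (jacobiSym m (Fintype.card F) : F) := by
    rw [quadraticChar_eq_pow_of_char_ne_two' hF, hcard, intCast_pow_prime_pow_div_two hF,
      jacobiSym.pow_right, ← jacobiSym.legendreSym.to_jacobiSym, Int.cast_pow]
  exact Int.cast_injOn_of_ringChar_ne_two hF (quadraticChar_isQuadratic F m)
    (jacobiSym.trichotomy _ _) hval

theorem jacobiSym.multiset_prod_right {a : ℤ} {s : Multiset ℕ} (hs : ∀ n ∈ s, n ≠ 0) :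
    jacobiSym a s.prod = (s.map fun n => jacobiSym a n).prod := by
  induction s using Quotient.inductionOn
  simpa using jacobiSym.list_prod_right hs

theorem quadResSym_intCast_eq_jacobiSym (K : Type*) [Field K] [NumberField K]
    (𝔭 : Ideal (𝓞 K)) [𝔭.IsMaximal] (h2 : (2 : 𝓞 K) ∉ 𝔭) (m : ℤ) :
    quadResSym K 𝔭 m = jacobiSym m (Ideal.absNorm 𝔭) := by
  classical
  let := Ideal.Quotient.field 𝔭
  let := Fintype.ofFinite (𝓞 K ⧸ 𝔭)
  have hF := Ideal.ringChar_quotient_ne_two h2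
  have hcard : Ideal.absNorm 𝔭 = Fintype.card (𝓞 K ⧸ 𝔭) := by
    rw [Ideal.absNorm_apply, Submodule.cardQuot_apply, Nat.card_eq_fintype_card]
  have hexp : (Fintype.card (𝓞 K ⧸ 𝔭) - 1) / 2 = Fintype.card (𝓞 K ⧸ 𝔭) / 2 := by
    have := FiniteField.odd_card_of_char_ne_two hF
    omega
  have hsym : ∀ a, quadResSym K 𝔭 a = quadraticChar (𝓞 K ⧸ 𝔭) (Ideal.Quotient.mk 𝔭 a) := by
    intro a
    simp only [quadResSym, ← Ideal.Quotient.eq_zero_iff_mem, map_sub, map_pow, map_one,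
      sub_eq_zero, hcard, hexp]
    split_ifs with ha hpow
    · rw [ha, quadraticChar_zero]
    · rw [quadraticChar_eq_pow_of_char_ne_two hF ha, if_pos hpow]
    · rw [quadraticChar_eq_pow_of_char_ne_two hF ha, if_neg hpow]
  rw [hsym, map_intCast, quadraticChar_intCast_eq_jacobiSym hF, hcard]

open UniqueFactorizationMonoid in
theorem quadResSymIdeal_eq_jacobiSym_general
    (K : Type*) [Field K] [NumberField K]
    (𝒜 : Ideal (𝓞 K)) (h𝒜 : 𝒜 ≠ ⊥)
    (hcop : IsCoprime 𝒜 (Ideal.span {((2 * discr K : ℤ) : 𝓞 K)})) :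
    ∀ m : ℤ, quadResSymIdeal K 𝒜 (m : 𝓞 K) = jacobiSym m (Ideal.absNorm 𝒜) := by
  intro m
  have hcop2 : IsCoprime 𝒜 (Ideal.span {(2 : 𝓞 K)}) :=
    hcop.of_isCoprime_of_dvd_right <| Ideal.dvd_span_singleton.mpr <|
      Ideal.mem_span_singleton.mpr ⟨(discr K : 𝓞 K), by push_cast; ring⟩
  have hfactor : ∀ 𝔭 ∈ normalizedFactors 𝒜, 𝔭.IsMaximal ∧ (2 : 𝓞 K) ∉ 𝔭 := by
    intro 𝔭 h𝔭
    obtain ⟨hprime, hle⟩ := (Ideal.mem_normalizedFactors_iff h𝒜).mp h𝔭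
    have hmax := hprime.isMaximal (ne_bot_of_le_ne_bot h𝒜 hle)
    exact ⟨hmax, Ideal.notMem_of_isCoprime_span_singleton hcop2 hle hmax.ne_top⟩
  have hsym : ∀ 𝔭 ∈ normalizedFactors 𝒜, quadResSym K 𝔭 m = jacobiSym m (Ideal.absNorm 𝔭) := by
    intro 𝔭 h𝔭
    obtain ⟨_, h2⟩ := hfactor 𝔭 h𝔭
    exact quadResSym_intCast_eq_jacobiSym K 𝔭 h2 m
  have hnorm : ∀ n ∈ (normalizedFactors 𝒜).map Ideal.absNorm, n ≠ 0 := by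
    refine Multiset.forall_mem_map_iff.mpr fun 𝔭 h𝔭 => ?_
    obtain ⟨_, _⟩ := hfactor 𝔭 h𝔭
    exact (Ideal.absNorm_ne_zero_iff 𝔭).mpr inferInstance
  rw [quadResSymIdeal, Multiset.map_congr rfl hsym]
  conv_rhs => rw [← Ideal.prod_normalizedFactors_eq_self h𝒜, map_multiset_prod,
    jacobiSym.multiset_prod_right hnorm, Multiset.map_map]
  rfl

/-- For a quadratic number field `K` and a nonzero ideal `𝒜` of `O_K` coprime to
`2 D_K`, the quadratic residue symbol `(m/𝒜)_K` equals the Jacobi symbol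
`(m/N(𝒜))` for every rational integer `m`. -/
theorem quadResSymIdeal_eq_jacobiSym
    (K : Type*) [Field K] [NumberField K] (hK : Module.finrank ℚ K = 2)
    (𝒜 : Ideal (𝓞 K)) (h𝒜 : 𝒜 ≠ ⊥)
    (hcop : IsCoprime 𝒜 (Ideal.span {((2 * discr K : ℤ) : 𝓞 K)})) :
    ∀ m : ℤ, quadResSymIdeal K 𝒜 (m : 𝓞 K) = jacobiSym m (Ideal.absNorm 𝒜) :=
  quadResSymIdeal_eq_jacobiSym_general K 𝒜 h𝒜 hcop
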